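/- arXiv:1302.6403 — 2 statements merged into one kernel-verified Lean document; each statement's English description precedes it below -/
import Mathlib

section
/- Let g : [0,1] → ℝ be concave with g(0) = 0, and let η(x) = -x log x (η(0)=0). Then for every integer k > 1, the liminf as x → 0⁺ of g(x)/η(x) equals the liminf as n → ∞ of g(k^{-n})/η(k^{-n}). -/
/-!
One inequality holds because `k^{-n} → 0`. For the other: concavity and `g 0 = 0` make
`g x / x` nonincreasing, while `η x / x = -log x`. For `k^{-(n+1)} < x ≤ k^{-n}` this gives
`g x / η x ≥ (g y / y) / (-log x)` with `y = k^{-n}`, and `-log x` lies between `n log k` and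
`(n + 1) log k`; so `g x / η x` is at least `min (r n) (n / (n + 1) * r n)`, where
`r n = g y / η y`, and `n → ∞` as `x → 0`.
-/

/-- The Shannon entropy function. -/
noncomputable def eta (x : ℝ) : ℝ := -x * Real.log x

open Filter Set Topology Real

lemma ConcaveOn.antitoneOn_div_of_map_zero {s : Set ℝ} {g : ℝ → ℝ} (hg : ConcaveOn ℝ s g)
    (h0s : 0 ∈ s) (h0 : g 0 = 0) : AntitoneOn (fun x => g x / x) {x ∈ s | 0 < x} := by
  have hslope : slope g 0 = fun x => g x / x := funext fun x => by simp [slope_def_field, h0]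
  exact hslope ▸ hg.antitoneOn_slope_gt h0s

lemma ConcaveOn.min_le_div_eta {s : Set ℝ} {g : ℝ → ℝ} (hg : ConcaveOn ℝ s g) (h0s : 0 ∈ s)
    (h0 : g 0 = 0) {x y t : ℝ} (hxs : x ∈ s) (hys : y ∈ s) (hx : 0 < x) (hxy : x ≤ y)
    (hy : y < 1) (ht : t * -log x ≤ -log y) :
    min (g y / eta y) (t * (g y / eta y)) ≤ g x / eta x := by
  have hly : 0 < -log y := neg_pos.2 (log_neg (hx.trans_le hxy) hy)
  have hlyx : -log y ≤ -log x := neg_le_neg (log_le_log hx hxy)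
  have hlx : 0 < -log x := hly.trans_le hlyx
  have hdiv : g y / y ≤ g x / x :=
    hg.antitoneOn_div_of_map_zero h0s h0 ⟨hxs, hx⟩ ⟨hys, hx.trans_le hxy⟩ hxy
  have hx_le : g y / y / -log x ≤ g x / eta x := by
    rw [eta, neg_mul_comm, ← div_div]
    gcongr
  rw [eta, neg_mul_comm, ← div_div]
  rcases le_total 0 (g y / y) with hpos | hneg
  · refine (min_le_right _ _).trans (le_trans ?_ hx_le)
    rw [← mul_div_assoc, div_le_div_iff₀ hly hlx]
    nlinarith [mul_le_mul_of_nonneg_left ht hpos]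
  · have hneg_div : g y / y / -log y ≤ g y / y / -log x := by
      simpa only [neg_div, neg_le_neg_iff] using
        div_le_div_of_nonneg_left (neg_nonneg.2 hneg) hly hlyx
    exact (min_le_left _ _).trans (hneg_div.trans hx_le)

lemma tendsto_inv_pow_nhdsWithin_Ioo {b : ℝ} (hb : 1 < b) :
    Tendsto (fun n : ℕ => (b ^ n)⁻¹) atTop (𝓝[Ioo 0 1] 0) := by
  refine tendsto_nhdsWithin_iff.2 ⟨?_, ?_⟩
  · exact tendsto_inv_atTop_zero.comp (tendsto_pow_atTop_atTop_of_one_lt hb)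
  · filter_upwards [eventually_ge_atTop 1] with n hn
    exact ⟨by positivity, inv_lt_one_of_one_lt₀ (one_lt_pow₀ hb (by omega))⟩

lemma exists_inv_pow_lt_le {b x : ℝ} (hb : 1 < b) {N : ℕ} (hx : 0 < x) (hxN : x ≤ (b ^ N)⁻¹) :
    ∃ n ≥ N, (b ^ (n + 1))⁻¹ < x ∧ x ≤ (b ^ n)⁻¹ := by
  have hb0 : 0 < b := zero_lt_one.trans hb
  have hNx : b ^ N ≤ x⁻¹ := (le_inv_comm₀ hx (by positivity)).1 hxN
  obtain ⟨n, hnx, hxn⟩ := exists_nat_pow_near ((one_le_pow₀ hb.le).trans hNx) hb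
  refine ⟨n, Nat.lt_succ_iff.1 ((pow_lt_pow_iff_right₀ hb).1 (hNx.trans_lt hxn)), ?_, ?_⟩
  · exact (inv_lt_comm₀ (by positivity) hx).2 hxn
  · exact (le_inv_comm₀ hx (by positivity)).2 hnx

lemma mul_neg_log_le_of_inv_pow_lt {b x : ℝ} (hb : 1 < b) {n : ℕ} (hx : (b ^ (n + 1))⁻¹ < x) :
    n / (n + 1) * -log x ≤ -log (b ^ n)⁻¹ := by
  have hlog : -log x < (n + 1) * log b := by
    have h := log_lt_log (by positivity) hx
    rw [log_inv, log_pow] at h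
    push_cast at h
    linarith
  calc n / (n + 1) * -log x ≤ n / (n + 1) * ((n + 1) * log b) := by gcongr
    _ = -log (b ^ n)⁻¹ := by rw [log_inv, log_pow, neg_neg]; field_simp

theorem liminf_ratio_along_powers_general (g : ℝ → ℝ)
    (hconc : ConcaveOn ℝ (Set.Icc 0 1) g) (h0 : g 0 = 0)
    (k : ℕ) (hk : 1 < k) :
    Filter.liminf (fun x : ℝ => ((g x / eta x : ℝ) : EReal))
        (nhdsWithin 0 (Set.Ioo 0 1))
      = Filter.liminf
          (fun n : ℕ => ((g (((k:ℝ)^n)⁻¹) / eta (((k:ℝ)^n)⁻¹) : ℝ) : EReal))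
          Filter.atTop := by
  have hk' : (1 : ℝ) < k := by exact_mod_cast hk
  refine le_antisymm (liminf_le_liminf_of_le (tendsto_inv_pow_nhdsWithin_Ioo hk')) ?_
  refine (le_liminf_iff).2 fun c hc => ?_
  obtain ⟨c₂, hcc₂, hc₂⟩ := EReal.lt_iff_exists_real_btwn.1 hc
  obtain ⟨c₁, hcc₁, hc₁₂⟩ := EReal.lt_iff_exists_real_btwn.1 hcc₂
  have hc₁₂ : c₁ < c₂ := mod_cast hc₁₂
  have hfrac : Tendsto (fun n : ℕ => (n : ℝ) / (n + 1) * c₂) atTop (𝓝 c₂) := by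
    simpa using (tendsto_natCast_div_add_atTop (1 : ℝ)).mul_const c₂
  obtain ⟨N, hN⟩ := ((eventually_lt_of_lt_liminf hc₂).and
    ((hfrac.eventually_const_lt hc₁₂).and (eventually_ge_atTop 1))).exists_forall_of_atTop
  filter_upwards [self_mem_nhdsWithin, nhdsWithin_le_nhds (Iio_mem_nhds
    (inv_pos.2 (pow_pos (zero_lt_one.trans hk') N)))] with x ⟨hx0, hx1⟩ hxN
  obtain ⟨n, hNn, hlow, hup⟩ := exists_inv_pow_lt_le hk' hx0 (le_of_lt hxN)
  obtain ⟨hrn, hc₁n, hn⟩ := hN n hNn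
  have hrn : c₂ < g ((k : ℝ) ^ n)⁻¹ / eta ((k : ℝ) ^ n)⁻¹ := mod_cast hrn
  have hy1 : ((k : ℝ) ^ n)⁻¹ < 1 := inv_lt_one_of_one_lt₀ (one_lt_pow₀ hk' (by omega))
  have hmin := hconc.min_le_div_eta (left_mem_Icc.2 zero_le_one) h0 ⟨hx0.le, hx1.le⟩
    ⟨by positivity, hy1.le⟩ hx0 hup hy1 (mul_neg_log_le_of_inv_pow_lt hk' hlow)
  refine hcc₁.trans (EReal.coe_lt_coe_iff.2 ((lt_min ?_ ?_).trans_le hmin))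
  · exact hc₁₂.trans hrn
  · exact hc₁n.trans_le (mul_le_mul_of_nonneg_left hrn.le (by positivity))

theorem liminf_ratio_along_powers (g : ℝ → ℝ)
    (hconc : ConcaveOn ℝ (Set.Icc 0 1) g) (h0 : g 0 = 0)
    (hlim : Filter.Tendsto g (nhdsWithin 0 (Set.Ioi 0)) (nhds 0))
    (k : ℕ) (hk : 1 < k) :
    Filter.liminf (fun x : ℝ => ((g x / eta x : ℝ) : EReal))
        (nhdsWithin 0 (Set.Ioo 0 1))
      = Filter.liminf
          (fun n : ℕ => ((g (((k:ℝ)^n)⁻¹) / eta (((k:ℝ)^n)⁻¹) : ℝ) : EReal))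
          Filter.atTop :=
  liminf_ratio_along_powers_general g hconc h0 k hk
end

section
/- Let g : [0,1] → ℝ be concave with g(0)=0 and η(x) = -x log x. Let k ≥ 2 be an integer. Then limsup_{n→∞} (1/n) kⁿ g(k^{-n}) = C·log k if C := limsup_{x→0⁺} g(x)/η(x) is finite, and equals +∞ if C = ∞. -/
/-! Since `g` is concave with `g 0 = 0`, the slope `g x / x` is antitone. Writing
`g x / eta x = (g x / x) / (-log x)`, on each shell `K ^ (-(m+1)) ≤ x ≤ K ^ (-m)` (with `K > 1`)
the ratio `g / eta` is bounded by its value at `K ^ (-(m+1))`, up to the factor `1 + 1/m` coming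
from `-log x ∈ [m log K, (m+1) log K]`. Hence the limsup of `g / eta` at `0⁺` equals its limsup
along `K ^ (-n)`, and `(1/n) kⁿ g(k⁻ⁿ) = log k · (g / eta)(k⁻ⁿ)`. -/

open Filter Topology Real Set

theorem ConcaveOn.antitoneOn_div_self {𝕜 : Type*} [Field 𝕜] [LinearOrder 𝕜] [IsStrictOrderedRing 𝕜]
    {s : Set 𝕜} {f : 𝕜 → 𝕜} (hf : ConcaveOn 𝕜 s f) (h0s : 0 ∈ s) (h0 : f 0 = 0) :
    AntitoneOn (fun x => f x / x) {x ∈ s | 0 < x} := by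
  have hslope : slope f 0 = fun x => f x / x := funext fun x => by simp [slope_def_field, h0]
  exact hslope ▸ hf.antitoneOn_slope_gt h0s

lemma div_le_max_div_of_mem_Icc {m p q t : ℝ} (hp : 0 < p) (ht : t ∈ Icc p q) :
    m / t ≤ max (m / q) (m / p) := by
  have htp : 0 < t := hp.trans_le ht.1
  rcases le_or_gt 0 m with hm | hm
  · exact le_max_of_le_right (div_le_div_of_nonneg_left hm hp ht.1)
  · refine le_max_of_le_left ?_
    rw [div_le_div_iff₀ htp (htp.trans_le ht.2)]
    nlinarith [ht.2]

lemma eta_inv_pow (K : ℝ) (n : ℕ) : eta (K ^ n)⁻¹ = (K ^ n)⁻¹ * (n * log K) := by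
  rw [eta, log_inv, log_pow]; ring

lemma div_eta_le_of_mem_Icc_inv_pow {g : ℝ → ℝ} (hg : ConcaveOn ℝ (Icc 0 1) g) (h0 : g 0 = 0)
    {K : ℝ} (hK : 1 < K) {n : ℕ} (hn : 0 < n) {x : ℝ} (hx : x ∈ Icc (K ^ (n + 1))⁻¹ (K ^ n)⁻¹) :
    g x / eta x ≤ max (g (K ^ (n + 1))⁻¹ / eta (K ^ (n + 1))⁻¹)
      ((1 + 1 / n) * (g (K ^ (n + 1))⁻¹ / eta (K ^ (n + 1))⁻¹)) := by
  set y := (K ^ (n + 1))⁻¹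
  have hlogK : 0 < log K := log_pos hK
  have hy : 0 < y := by positivity
  have hx0 : 0 < x := hy.trans_le hx.1
  have hx1 : x ≤ 1 := hx.2.trans (inv_le_one_of_one_le₀ (one_le_pow₀ hK.le))
  have hslope : g x / x ≤ g y / y :=
    hg.antitoneOn_div_self (by simp) h0 ⟨⟨hy.le, hx.1.trans hx1⟩, hy⟩ ⟨⟨hx0.le, hx1⟩, hx0⟩ hx.1
  have hlog : -log x ∈ Icc (n * log K) ((n + 1 : ℕ) * log K) := by
    constructor
    · have := log_le_log hx0 hx.2
      rw [log_inv, log_pow] at this; linarith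
    · have := log_le_log hy hx.1
      rw [log_inv, log_pow] at this; linarith
  have hnlogK : 0 < n * log K := by positivity
  calc g x / eta x = (g x / x) / (-log x) := by rw [div_div, eta, neg_mul, mul_neg]
    _ ≤ (g y / y) / (-log x) := div_le_div_of_nonneg_right hslope (hnlogK.le.trans hlog.1)
    _ ≤ max ((g y / y) / ((n + 1 : ℕ) * log K)) ((g y / y) / (n * log K)) :=
      div_le_max_div_of_mem_Icc hnlogK hlog
    _ = _ := by
      rw [eta_inv_pow]
      congr 1
      · rw [div_div, mul_comm]
      · simp only [y]
        field_simp
        push_cast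
        ring

lemma limsup_max_mul_le_limsup {α : Type*} {l : Filter α} [l.NeBot] {u c : α → ℝ}
    (hc : Tendsto c l (𝓝 1)) (hc0 : ∀ᶠ a in l, 0 ≤ c a) :
    limsup (fun a => ((max (u a) (c a * u a) : ℝ) : EReal)) l ≤
      limsup (fun a => (u a : EReal)) l := by
  refine EReal.le_of_forall_lt_iff_le.1 fun r hr => ?_
  have hur : ∀ᶠ a in l, u a < r := by
    filter_upwards [eventually_lt_of_limsup_lt hr] with a ha using EReal.coe_lt_coe_iff.1 ha
  have hbound : Tendsto (fun a => ((max r (c a * r) : ℝ) : EReal)) l (𝓝 r) := by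
    simpa using EReal.tendsto_coe.2 ((tendsto_const_nhds (x := r)).max (hc.mul_const r))
  calc limsup (fun a => ((max (u a) (c a * u a) : ℝ) : EReal)) l
      ≤ limsup (fun a => ((max r (c a * r) : ℝ) : EReal)) l := by
        refine limsup_le_limsup ?_
        filter_upwards [hur, hc0] with a hua hca
        exact EReal.coe_le_coe_iff.2 (max_le_max hua.le (mul_le_mul_of_nonneg_left hua.le hca))
    _ = r := hbound.limsup_eq

lemma tendsto_floor_logb_inv_nhdsGT_zero {K : ℝ} (hK : 1 < K) :
    Tendsto (fun x : ℝ => ⌊logb K x⁻¹⌋₊) (𝓝[>] 0) atTop :=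
  tendsto_nat_floor_atTop.comp ((tendsto_logb_atTop hK).comp tendsto_inv_nhdsGT_zero)

lemma mem_Icc_inv_pow_floor_logb_inv {K : ℝ} (hK : 1 < K) {x : ℝ} (hx0 : 0 < x) (hx1 : x ≤ 1) :
    x ∈ Icc (K ^ (⌊logb K x⁻¹⌋₊ + 1))⁻¹ (K ^ ⌊logb K x⁻¹⌋₊)⁻¹ := by
  have hK0 : 0 < K := by linarith
  have hlogb : 0 ≤ logb K x⁻¹ := logb_nonneg hK (one_le_inv₀ hx0 |>.2 hx1)
  constructor
  · rw [inv_le_comm₀ (by positivity) hx0, ← rpow_natCast]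
    refine ((logb_lt_iff_lt_rpow hK (by positivity)).1 ?_).le
    exact_mod_cast Nat.lt_floor_add_one _
  · rw [le_inv_comm₀ hx0 (by positivity), ← rpow_natCast, ← le_logb_iff_rpow_le hK (by positivity)]
    exact Nat.floor_le hlogb

lemma limsup_div_eta_le_limsup_inv_pow {g : ℝ → ℝ} (hg : ConcaveOn ℝ (Icc 0 1) g) (h0 : g 0 = 0)
    {K : ℝ} (hK : 1 < K) :
    limsup (fun x => ((g x / eta x : ℝ) : EReal)) (𝓝[Ioo 0 1] 0) ≤
      limsup (fun n : ℕ => ((g (K ^ n)⁻¹ / eta (K ^ n)⁻¹ : ℝ) : EReal)) atTop := by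
  set a : ℕ → ℝ := fun n => g (K ^ n)⁻¹ / eta (K ^ n)⁻¹
  set b : ℕ → ℝ := fun n => max (a (n + 1)) ((1 + 1 / n) * a (n + 1))
  set N : ℝ → ℕ := fun x => ⌊logb K x⁻¹⌋₊
  have hN : Tendsto N (𝓝[Ioo 0 1] 0) atTop :=
    (tendsto_floor_logb_inv_nhdsGT_zero hK).mono_left (nhdsWithin_mono _ Ioo_subset_Ioi_self)
  calc limsup (fun x => ((g x / eta x : ℝ) : EReal)) (𝓝[Ioo 0 1] 0)
      ≤ limsup (fun x => (b (N x) : EReal)) (𝓝[Ioo 0 1] 0) := by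
        refine limsup_le_limsup ?_
        filter_upwards [self_mem_nhdsWithin, hN.eventually_gt_atTop 0] with x hx hNx
        exact EReal.coe_le_coe_iff.2 (div_eta_le_of_mem_Icc_inv_pow hg h0 hK hNx
          (mem_Icc_inv_pow_floor_logb_inv hK hx.1 hx.2.le))
    _ ≤ limsup (fun n => (b n : EReal)) atTop :=
        hN.limsup_comp_le_limsup (u := fun n => (b n : EReal))
    _ ≤ limsup (fun n => (a (n + 1) : EReal)) atTop := by
        refine limsup_max_mul_le_limsup ?_ (Eventually.of_forall fun n => by positivity)
        simpa using tendsto_const_nhds.add (tendsto_one_div_atTop_nhds_zero_nat (𝕜 := ℝ))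
    _ = limsup (fun n => (a n : EReal)) atTop := limsup_nat_add (fun n => (a n : EReal)) 1

lemma limsup_inv_pow_le_limsup_div_eta (g : ℝ → ℝ) {K : ℝ} (hK : 1 < K) :
    limsup (fun n : ℕ => ((g (K ^ n)⁻¹ / eta (K ^ n)⁻¹ : ℝ) : EReal)) atTop ≤
      limsup (fun x => ((g x / eta x : ℝ) : EReal)) (𝓝[Ioo 0 1] 0) := by
  have hinv : Tendsto (fun n : ℕ => (K ^ n)⁻¹) atTop (𝓝[Ioo 0 1] 0) := by
    refine tendsto_nhdsWithin_iff.2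
      ⟨(tendsto_pow_atTop_atTop_of_one_lt hK).inv_tendsto_atTop, ?_⟩
    filter_upwards [eventually_gt_atTop 0] with n hn
    exact ⟨by positivity, inv_lt_one_of_one_lt₀ (one_lt_pow₀ hK hn.ne')⟩
  exact hinv.limsup_comp_le_limsup (u := fun x => ((g x / eta x : ℝ) : EReal))

lemma limsup_div_eta_eq_limsup_inv_pow {g : ℝ → ℝ} (hg : ConcaveOn ℝ (Icc 0 1) g) (h0 : g 0 = 0)
    {K : ℝ} (hK : 1 < K) :
    limsup (fun x => ((g x / eta x : ℝ) : EReal)) (𝓝[Ioo 0 1] 0) =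
      limsup (fun n : ℕ => ((g (K ^ n)⁻¹ / eta (K ^ n)⁻¹ : ℝ) : EReal)) atTop :=
  (limsup_div_eta_le_limsup_inv_pow hg h0 hK).antisymm (limsup_inv_pow_le_limsup_div_eta g hK)

lemma one_div_mul_pow_mul_apply_inv_pow (g : ℝ → ℝ) {K : ℝ} (hK : 1 < K) (n : ℕ) :
    1 / n * (K ^ n * g (K ^ n)⁻¹) = log K * (g (K ^ n)⁻¹ / eta (K ^ n)⁻¹) := by
  rcases n.eq_zero_or_pos with rfl | hn
  · simp [eta]
  have hlogK : 0 < log K := log_pos hK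
  have hK0 : 0 < K := by linarith
  rw [eta_inv_pow]
  field_simp

theorem limsup_bernoulli_g_entropy_general (g : ℝ → ℝ)
    (hconc : ConcaveOn ℝ (Set.Icc 0 1) g) (h0 : g 0 = 0)
    (k : ℕ) (hk : 2 ≤ k) :
    (∀ C : ℝ,
      Filter.limsup (fun x : ℝ => ((g x / eta x : ℝ) : EReal))
          (nhdsWithin 0 (Set.Ioo 0 1)) = (C : EReal) →
      Filter.limsup
          (fun n : ℕ => (((1/(n:ℝ)) * ((k:ℝ)^n * g (((k:ℝ)^n)⁻¹)) : ℝ) : EReal))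
          Filter.atTop = ((C * Real.log k : ℝ) : EReal)) ∧
    (Filter.limsup (fun x : ℝ => ((g x / eta x : ℝ) : EReal))
          (nhdsWithin 0 (Set.Ioo 0 1)) = ⊤ →
      Filter.limsup
          (fun n : ℕ => (((1/(n:ℝ)) * ((k:ℝ)^n * g (((k:ℝ)^n)⁻¹)) : ℝ) : EReal))
          Filter.atTop = ⊤) := by
  have hk1 : (1 : ℝ) < k := by exact_mod_cast hk
  have hlogk : 0 < log k := log_pos hk1
  have hseq : limsup (fun n : ℕ => ((1 / (n : ℝ) * ((k : ℝ) ^ n * g ((k : ℝ) ^ n)⁻¹) : ℝ) : EReal))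
      atTop = (log k : EReal) * limsup (fun x => ((g x / eta x : ℝ) : EReal)) (𝓝[Ioo 0 1] 0) := by
    simp_rw [one_div_mul_pow_mul_apply_inv_pow g hk1, EReal.coe_mul,
      limsup_div_eta_eq_limsup_inv_pow hconc h0 hk1]
    exact EReal.limsup_const_mul_of_nonneg_of_ne_top (EReal.coe_nonneg.2 hlogk.le)
      (EReal.coe_ne_top _)
  refine ⟨fun C hC => ?_, fun hC => ?_⟩
  · rw [hseq, hC, ← EReal.coe_mul, mul_comm]
  · rw [hseq, hC, EReal.coe_mul_top_of_pos hlogk]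

theorem limsup_bernoulli_g_entropy (g : ℝ → ℝ)
    (hconc : ConcaveOn ℝ (Set.Icc 0 1) g) (h0 : g 0 = 0)
    (hlim : Filter.Tendsto g (nhdsWithin 0 (Set.Ioi 0)) (nhds 0))
    (k : ℕ) (hk : 2 ≤ k) :
    (∀ C : ℝ,
      Filter.limsup (fun x : ℝ => ((g x / eta x : ℝ) : EReal))
          (nhdsWithin 0 (Set.Ioo 0 1)) = (C : EReal) →
      Filter.limsup
          (fun n : ℕ => (((1/(n:ℝ)) * ((k:ℝ)^n * g (((k:ℝ)^n)⁻¹)) : ℝ) : EReal))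
          Filter.atTop = ((C * Real.log k : ℝ) : EReal)) ∧
    (Filter.limsup (fun x : ℝ => ((g x / eta x : ℝ) : EReal))
          (nhdsWithin 0 (Set.Ioo 0 1)) = ⊤ →
      Filter.limsup
          (fun n : ℕ => (((1/(n:ℝ)) * ((k:ℝ)^n * g (((k:ℝ)^n)⁻¹)) : ℝ) : EReal))
          Filter.atTop = ⊤) :=
  limsup_bernoulli_g_entropy_general g hconc h0 k hk
end
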